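/- arXiv:1804.04943 — 3 statements merged into one kernel-verified Lean document; each statement's English description precedes it below -/
import Mathlib

section
/- For any constants a_1,…,a_d and any 1 ≤ k ≤ d, if ∏_{i=1}^{d}(1 + a_i·x·d/dx) e^x = p(x)·e^x with p a polynomial, then the coefficient of x^k in p(x) is Σ_{j=k}^{d} E_j(a_1,…,a_d)·S(j,k), where E_j is the j-th elementary symmetric polynomial and S(j,k) is a Stirling number of the second kind. -/
open Finset

/-- Stirling numbers of the second kind: `stirling2 n k` is the number of partitions of an
`n`-element set into `k` nonempty blocks. -/
def stirling2 : ℕ → ℕ → ℕ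
  | 0, 0 => 1
  | 0, _ + 1 => 0
  | _ + 1, 0 => 0
  | n + 1, k + 1 => (k + 1) * stirling2 n (k + 1) + stirling2 n k

/-- Unsigned Stirling numbers of the first kind: `stirling1 n k` counts permutations of `n`
elements with exactly `k` disjoint cycles. -/
def stirling1 : ℕ → ℕ → ℕ
  | 0, 0 => 1
  | 0, _ + 1 => 0
  | _ + 1, 0 => 0
  | n + 1, k + 1 => n * stirling1 n (k + 1) + stirling1 n k

/-- The `j`-th elementary symmetric polynomial in `d` variables, evaluated at `a`. -/
def esymm (d j : ℕ) (a : Fin d → ℝ) : ℝ :=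
  ∑ s ∈ Finset.powersetCard j (Finset.univ : Finset (Fin d)), ∏ i ∈ s, a i

/-- The operator `x·d/dx` acting on functions. -/
noncomputable def thetaOp (f : ℝ → ℝ) : ℝ → ℝ := fun x => x * deriv f x

/-- The operator `1 + a·x·d/dx` acting on functions. -/
noncomputable def eulerOp (a : ℝ) (f : ℝ → ℝ) : ℝ → ℝ := fun x => f x + a * x * deriv f x

/-- The composite operator `∏_{i=1}^d (1 + aᵢ·x·d/dx)`. -/
noncomputable def opProd (d : ℕ) (a : Fin d → ℝ) : (ℝ → ℝ) → ℝ → ℝ :=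
  (List.ofFn fun i : Fin d => eulerOp (a i)).foldr (· ∘ ·) id

/-!
The operator `θ = x·d/dx` sends `P·eˣ` to `(X·(P' + P))·eˣ`, so on polynomial factors it acts as a
linear map `θ̃ = thetaExp` of `ℝ[X]`, and `∏ (1 + aᵢθ) eˣ = q(θ̃)(1)·eˣ` with
`q = ∏ (1 + aᵢX) = ∑ⱼ Eⱼ Xʲ`. The polynomials `θ̃ʲ(1)` are the Touchard polynomials: the recurrence
`θ̃ (∑ cₖ Xᵏ) = ∑ (k·cₖ + cₖ₋₁) Xᵏ` is the Stirling recurrence, so `θ̃ʲ(1) = ∑ₖ S(j,k) Xᵏ`.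
-/

open Polynomial

noncomputable def thetaExp : ℝ[X] →ₗ[ℝ] ℝ[X] :=
  LinearMap.mulLeft ℝ X ∘ₗ (derivative + LinearMap.id)

lemma thetaExp_apply (P : ℝ[X]) : thetaExp P = X * (derivative P + P) := rfl

lemma coeff_thetaExp_zero (P : ℝ[X]) : (thetaExp P).coeff 0 = 0 := by
  simp [thetaExp_apply]

lemma coeff_thetaExp_succ (P : ℝ[X]) (k : ℕ) :
    (thetaExp P).coeff (k + 1) = (k + 1) * P.coeff (k + 1) + P.coeff k := by
  simp [thetaExp_apply, coeff_derivative]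
  ring

lemma coeff_thetaExp_pow_one (j k : ℕ) : ((thetaExp ^ j) 1).coeff k = stirling2 j k := by
  induction j generalizing k with
  | zero => cases k <;> simp [stirling2, coeff_one]
  | succ j ih =>
    rw [pow_succ', Module.End.mul_apply]
    cases k with
    | zero => simp [coeff_thetaExp_zero, stirling2]
    | succ k => simp [coeff_thetaExp_succ, ih, stirling2]

lemma stirling2_eq_zero_of_lt : ∀ {j k : ℕ}, j < k → stirling2 j k = 0
  | 0, _ + 1, _ => rfl
  | _ + 1, _ + 1, h => by
    simp [stirling2, stirling2_eq_zero_of_lt (Nat.lt_of_succ_lt_succ h),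
      stirling2_eq_zero_of_lt (Nat.lt_of_succ_lt h)]

lemma eulerOp_eval_mul_exp (c : ℝ) (P : ℝ[X]) :
    eulerOp c (fun x => P.eval x * Real.exp x) =
      fun x => (P + c • thetaExp P).eval x * Real.exp x := by
  funext x
  have hderiv : deriv (fun x => P.eval x * Real.exp x) x
      = (derivative P).eval x * Real.exp x + P.eval x * Real.exp x :=
    ((P.hasDerivAt x).mul (Real.hasDerivAt_exp x)).deriv
  simp only [eulerOp, hderiv, thetaExp_apply, eval_add, eval_smul, eval_mul, eval_X, smul_eq_mul]
  ring

lemma foldr_map_eulerOp_eval_mul_exp (l : List ℝ) (P : ℝ[X]) :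
    (l.map eulerOp).foldr (· ∘ ·) id (fun x => P.eval x * Real.exp x) =
      fun x => (aeval thetaExp (l.map fun c => 1 + C c * X).prod P).eval x * Real.exp x := by
  induction l with
  | nil => simp
  | cons c l ih =>
    simp only [List.map_cons, List.foldr_cons, Function.comp_apply, ih, eulerOp_eval_mul_exp,
      List.prod_cons, map_mul, map_add, map_one, aeval_C, aeval_X, Module.End.mul_apply]
    simp [Algebra.algebraMap_eq_smul_one, LinearMap.add_apply]

lemma opProd_exp (d : ℕ) (a : Fin d → ℝ) :
    opProd d a Real.exp =
      fun x => (aeval thetaExp (∏ i, (1 + C (a i) * X)) 1).eval x * Real.exp x := by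
  have h := foldr_map_eulerOp_eval_mul_exp (List.ofFn a) 1
  simp only [eval_one, one_mul, List.map_ofFn, List.prod_ofFn] at h
  exact h

lemma Finset.prod_one_add_C_mul_X_eq_sum {R ι : Type*} [CommSemiring R] (s : Finset ι)
    (a : ι → R) :
    ∏ i ∈ s, (1 + C (a i) * X) =
      ∑ j ∈ range (#s + 1), (∑ t ∈ s.powersetCard j, ∏ i ∈ t, a i) • X ^ j := by
  rw [prod_one_add, sum_powerset]
  refine sum_congr rfl fun j _ => ?_
  rw [sum_smul]
  refine sum_congr rfl fun t ht => ?_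
  rw [prod_mul_distrib, prod_const, (mem_powersetCard.1 ht).2, ← map_prod, smul_eq_C_mul]

theorem coeff_eq_esymm_stirling_general (d : ℕ) (a : Fin d → ℝ) (k : ℕ)
    (p : Polynomial ℝ)
    (hp : opProd d a Real.exp = fun x => p.eval x * Real.exp x) :
    p.coeff k = ∑ j ∈ Finset.Icc k d, esymm d j a * (stirling2 j k : ℝ) := by
  have hp_eq : p = aeval thetaExp (∏ i, (1 + C (a i) * X)) 1 :=
    Polynomial.funext fun x => mul_right_cancel₀ (Real.exp_ne_zero x)
      (congrFun (hp.symm.trans (opProd_exp d a)) x)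
  rw [hp_eq, Finset.prod_one_add_C_mul_X_eq_sum, card_univ, Fintype.card_fin]
  simp only [map_sum, map_smul, aeval_X_pow, LinearMap.sum_apply, finsetSum_coeff,
    LinearMap.smul_apply, coeff_smul, coeff_thetaExp_pow_one, smul_eq_mul]
  refine (sum_subset (fun j hj => ?_) fun j hj hjk => ?_).symm
  · simp only [mem_Icc, mem_range] at hj ⊢
    omega
  · simp only [mem_Icc, mem_range, not_and, not_le] at hj hjk
    rw [stirling2_eq_zero_of_lt (by omega), Nat.cast_zero, mul_zero]

theorem coeff_eq_esymm_stirling (d : ℕ) (a : Fin d → ℝ) (k : ℕ) (hk1 : 1 ≤ k) (hkd : k ≤ d)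
    (p : Polynomial ℝ)
    (hp : opProd d a Real.exp = fun x => p.eval x * Real.exp x) :
    p.coeff k = ∑ j ∈ Finset.Icc k d, esymm d j a * (stirling2 j k : ℝ) :=
  coeff_eq_esymm_stirling_general d a k p hp
end

section
/- For all natural numbers n ≥ 1 and 0 ≤ k ≤ n: Σ_{j=k}^{n} E_j(1, 1/2, 1/3, …, 1/n)·S(j,k) = (n choose k)/k!, where E_j is the j-th elementary symmetric polynomial in n variables (with E_0 = 1 and the j = k = 0 term interpreted via S(0,0) = 1) and S(j,k) is the Stirling number of the second kind. -/
open Finset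

/-! With `θ = x·d/dx` one has `θ^j = ∑ₖ S(j,k) xᵏ Dᵏ`, so `∑ⱼ Eⱼ(a) S(j,k)` is the coefficient of
`xᵏ Dᵏ` in `∏ᵢ (1 + aᵢ θ)`. As `θ (xᵏ Dᵏ) = k xᵏ Dᵏ + xᵏ⁺¹ Dᵏ⁺¹`, one more factor `1 + a θ` sends
these coefficients `Tₙ` to `Tₙ₊₁(k+1) = (1 + (k+1) a) Tₙ(k+1) + a Tₙ(k)`; with `a = 1/(n+1)` this is
the recurrence satisfied by `C(n,k)/k!`. -/

theorem stirling2_eq_stirlingSecond : stirling2 = Nat.stirlingSecond := by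
  funext n k
  induction n generalizing k with
  | zero => cases k <;> rfl
  | succ n ih => cases k <;> simp [stirling2, Nat.stirlingSecond, ih]

theorem Finset.sum_powersetCard_succ_insert_prod {α R : Type*} [DecidableEq α] [CommSemiring R]
    {x : α} {s : Finset α} (hx : x ∉ s) (f : α → R) (j : ℕ) :
    ∑ t ∈ powersetCard (j + 1) (insert x s), ∏ i ∈ t, f i =
      ∑ t ∈ powersetCard (j + 1) s, ∏ i ∈ t, f i + f x * ∑ t ∈ powersetCard j s, ∏ i ∈ t, f i := by
  have not_mem {m : ℕ} {t : Finset α} (ht : t ∈ powersetCard m s) : x ∉ t :=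
    fun h => hx ((mem_powersetCard.1 ht).1 h)
  rw [powersetCard_succ_insert hx, sum_union, sum_image, mul_sum]
  · exact congrArg _ (sum_congr rfl fun t ht => prod_insert (not_mem ht))
  · intro t ht u hu htu
    simpa [erase_insert (not_mem ht), erase_insert (not_mem hu)] using congrArg (erase · x) htu
  · simp only [disjoint_left, mem_image, not_exists, not_and]
    intro t ht u _ hut
    exact not_mem ht (hut ▸ mem_insert_self x u)

theorem esymm_zero (d : ℕ) (a : Fin d → ℝ) : esymm d 0 a = 1 := by
  simp [esymm]

theorem esymm_eq_zero_of_lt {d j : ℕ} (h : d < j) (a : Fin d → ℝ) : esymm d j a = 0 := by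
  rw [esymm, powersetCard_eq_empty.2 (by simpa using h), sum_empty]

theorem esymm_succ_succ (n j : ℕ) (a : Fin (n + 1) → ℝ) :
    esymm (n + 1) (j + 1) a =
      esymm n (j + 1) (a ∘ Fin.castSucc) + a (Fin.last n) * esymm n j (a ∘ Fin.castSucc) := by
  have hlast : Fin.last n ∉ univ.map Fin.castSuccEmb := by simp [Fin.castSucc_ne_last]
  simp only [esymm, Fin.univ_castSuccEmb, cons_eq_insert, sum_powersetCard_succ_insert_prod hlast,
    powersetCard_map, sum_map, RelEmbedding.coe_toEmbedding, mapEmbedding_apply, prod_map]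
  rfl

def esymmStirlingSum (d : ℕ) (a : Fin d → ℝ) (k : ℕ) : ℝ :=
  ∑ j ∈ range (d + 1), esymm d j a * Nat.stirlingSecond j k

theorem esymmStirlingSum_zero_right (d : ℕ) (a : Fin d → ℝ) : esymmStirlingSum d a 0 = 1 := by
  simp [esymmStirlingSum, sum_range_succ', esymm_zero]

theorem esymmStirlingSum_zero_left (a : Fin 0 → ℝ) (k : ℕ) :
    esymmStirlingSum 0 a k = Nat.stirlingSecond 0 k := by
  simp [esymmStirlingSum, esymm_zero]

theorem esymmStirlingSum_succ_succ (n : ℕ) (a : Fin (n + 1) → ℝ) (k : ℕ) :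
    esymmStirlingSum (n + 1) a (k + 1) =
      (1 + (k + 1) * a (Fin.last n)) * esymmStirlingSum n (a ∘ Fin.castSucc) (k + 1) +
        a (Fin.last n) * esymmStirlingSum n (a ∘ Fin.castSucc) k := by
  set b := a ∘ Fin.castSucc
  have shift : ∑ j ∈ range (n + 1), esymm n (j + 1) b * Nat.stirlingSecond (j + 1) (k + 1) =
      esymmStirlingSum n b (k + 1) := by
    have h := sum_range_succ' (fun j => esymm n j b * Nat.stirlingSecond j (k + 1)) (n + 1)
    rw [sum_range_succ, esymm_eq_zero_of_lt n.lt_succ_self] at h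
    simpa [esymmStirlingSum] using h.symm
  rw [esymmStirlingSum, sum_range_succ', Nat.stirlingSecond_zero_succ, Nat.cast_zero, mul_zero,
    add_zero]
  calc ∑ j ∈ range (n + 1), esymm (n + 1) (j + 1) a * Nat.stirlingSecond (j + 1) (k + 1)
      = ∑ j ∈ range (n + 1), (esymm n (j + 1) b * Nat.stirlingSecond (j + 1) (k + 1) +
          a (Fin.last n) * ((k + 1) * (esymm n j b * Nat.stirlingSecond j (k + 1)) +
            esymm n j b * Nat.stirlingSecond j k)) := by
        refine sum_congr rfl fun j _ => ?_
        rw [esymm_succ_succ, Nat.stirlingSecond_succ_succ]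
        push_cast
        ring
    _ = _ := by
        rw [sum_add_distrib, shift, ← mul_sum, sum_add_distrib, ← mul_sum]
        simp only [esymmStirlingSum]
        ring

theorem esymmStirlingSum_inv_succ (n k : ℕ) :
    esymmStirlingSum n (fun i => 1 / (i.1 + 1)) k = n.choose k / k.factorial := by
  induction n generalizing k with
  | zero => cases k <;> simp [esymmStirlingSum_zero_left]
  | succ n ih =>
    cases k with
    | zero => simp [esymmStirlingSum_zero_right]
    | succ k =>
      have hb : (fun i : Fin (n + 1) => (1 : ℝ) / (i.1 + 1)) ∘ Fin.castSucc =
          fun i : Fin n => (1 : ℝ) / (i.1 + 1) := rfl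
      have hchoose : ((n : ℝ) + 1) * n.choose k = (n.choose k + n.choose (k + 1)) * (k + 1) := by
        exact_mod_cast Nat.choose_succ_succ' n k ▸ Nat.add_one_mul_choose_eq n k
      rw [esymmStirlingSum_succ_succ, hb, ih, ih, Nat.choose_succ_succ', Nat.factorial_succ]
      push_cast
      field_simp
      linear_combination -hchoose

theorem esymm_reciprocal_stirling_general (n : ℕ) (k : ℕ) :
    ∑ j ∈ Finset.Icc k n, esymm n j (fun i => (1 : ℝ) / (i.1 + 1)) * (stirling2 j k : ℝ) =
      (n.choose k : ℝ) / (k.factorial : ℝ) := by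
  rw [← esymmStirlingSum_inv_succ, esymmStirlingSum, stirling2_eq_stirlingSecond]
  refine sum_subset (fun j hj => ?_) (fun j _ hj => ?_)
  · simp only [mem_Icc, mem_range] at hj ⊢
    omega
  · rw [Nat.stirlingSecond_eq_zero_of_lt (by simp_all), Nat.cast_zero, mul_zero]

theorem esymm_reciprocal_stirling (n : ℕ) (hn : 1 ≤ n) (k : ℕ) (hk : k ≤ n) :
    ∑ j ∈ Finset.Icc k n, esymm n j (fun i => (1 : ℝ) / (i.1 + 1)) * (stirling2 j k : ℝ) =
      (n.choose k : ℝ) / (k.factorial : ℝ) :=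
  esymm_reciprocal_stirling_general n k
end

section
/- For all n ≥ 1, ∏_{j=1}^{n} (1 + (1/j)·x·d/dx) applied to e^x equals p(x)·e^x where p(x) = Σ_{j=0}^{n} (1/j!)·(n choose j)·x^j. -/
/-!
Conjugating by `e^x` turns each factor `1 + c·x·d/dx` into the polynomial operator
`p ↦ p + c·X·(p' + p)`. These operators commute, so the product of the first `n + 1` of them,
applied to `1`, is the factor with `c = 1/(n+1)` applied to the value `p_n` for the first `n`.
The recursion `p_{n+1} = p_n + X·(p_n' + p_n)/(n+1)` then holds coefficientwise by Pascal's rule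
and `(n+1)·C(n,k) = (k+1)·C(n+1,k+1)`.
-/

open Finset

open Polynomial

section FoldrComp

variable {α β : Type*}

theorem foldr_comp_eq_comp (l : List (α → α)) (g : α → α) :
    l.foldr (· ∘ ·) g = l.foldr (· ∘ ·) id ∘ g := by
  induction l with
  | nil => rfl
  | cons f l ih => simp only [List.foldr_cons, ih]; rfl

theorem foldr_comp_ofFn_succ' {n : ℕ} (f : Fin (n + 1) → α → α) :
    (List.ofFn f).foldr (· ∘ ·) id =
      (List.ofFn fun i : Fin n => f i.castSucc).foldr (· ∘ ·) id ∘ f (Fin.last n) := by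
  rw [List.ofFn_succ', List.concat_eq_append, List.foldr_append]
  exact foldr_comp_eq_comp _ _

theorem semiconj_foldr_comp_ofFn {n : ℕ} (e : α → β) (f : Fin n → α → α)
    (g : Fin n → β → β) (h : ∀ i, Function.Semiconj e (f i) (g i)) :
    Function.Semiconj e ((List.ofFn f).foldr (· ∘ ·) id)
      ((List.ofFn g).foldr (· ∘ ·) id) := by
  induction n with
  | zero => exact Function.Semiconj.id_right
  | succ n ih =>
    simp only [List.ofFn_succ, List.foldr_cons]
    exact (h 0).comp_right (ih _ _ fun i => h i.succ)

end FoldrComp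

section PolyEulerOp

variable {R : Type*} [CommSemiring R]

/-- `e^{-x} · (1 + c·x·d/dx) (p · e^x)`. -/
noncomputable def polyEulerOp (c : R) (p : R[X]) : R[X] := p + C c * (X * (derivative p + p))

noncomputable def polyOpProd (d : ℕ) (a : Fin d → R) : R[X] → R[X] :=
  (List.ofFn fun i : Fin d => polyEulerOp (a i)).foldr (· ∘ ·) id

theorem polyEulerOp_commute (c c' : R) : Function.Commute (polyEulerOp c) (polyEulerOp c') := by
  intro p
  simp only [polyEulerOp, derivative_add, derivative_mul, derivative_C, derivative_X]
  ring

theorem coeff_polyEulerOp_zero (c : R) (p : R[X]) : (polyEulerOp c p).coeff 0 = p.coeff 0 := by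
  simp [polyEulerOp]

theorem coeff_polyEulerOp_succ (c : R) (p : R[X]) (k : ℕ) :
    (polyEulerOp c p).coeff (k + 1) =
      p.coeff (k + 1) + c * (p.coeff (k + 1) * (k + 1) + p.coeff k) := by
  simp [polyEulerOp, coeff_X_mul, coeff_derivative]

theorem polyOpProd_succ' {n : ℕ} (a : Fin (n + 1) → R) :
    polyOpProd (n + 1) a = polyOpProd n (fun i => a i.castSucc) ∘ polyEulerOp (a (Fin.last n)) :=
  foldr_comp_ofFn_succ' _

theorem polyOpProd_commute (n : ℕ) (a : Fin n → R) (c : R) :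
    Function.Commute (polyEulerOp c) (polyOpProd n a) :=
  semiconj_foldr_comp_ofFn _ _ _ fun i => polyEulerOp_commute c (a i)

end PolyEulerOp

noncomputable def evalMulExp (p : ℝ[X]) : ℝ → ℝ := fun x => p.eval x * Real.exp x

theorem semiconj_evalMulExp_eulerOp (c : ℝ) :
    Function.Semiconj evalMulExp (polyEulerOp c) (eulerOp c) := by
  intro p
  funext x
  have hderiv : HasDerivAt (evalMulExp p)
      ((derivative p).eval x * Real.exp x + p.eval x * Real.exp x) x :=
    (p.hasDerivAt x).mul (Real.hasDerivAt_exp x)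
  simp only [eulerOp, hderiv.deriv, evalMulExp, polyEulerOp, eval_add, eval_mul, eval_C, eval_X]
  ring

theorem semiconj_evalMulExp_opProd (n : ℕ) (a : Fin n → ℝ) :
    Function.Semiconj evalMulExp (polyOpProd n a) (opProd n a) :=
  semiconj_foldr_comp_ofFn _ _ _ fun i => semiconj_evalMulExp_eulerOp (a i)

section Laguerre

variable {K : Type*} [Field K] [CharZero K]

/-- `L_n(-X)`, the `n`-th Laguerre polynomial evaluated at `-X`. -/
noncomputable def laguerreNeg (n : ℕ) : K[X] :=
  ∑ j ∈ Finset.range (n + 1), C ((1 / (j.factorial : K)) * (n.choose j : K)) * X ^ j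

theorem coeff_laguerreNeg (n k : ℕ) :
    (laguerreNeg n : K[X]).coeff k = (n.choose k : K) / k.factorial := by
  simp only [laguerreNeg, finsetSum_coeff, coeff_C_mul_X_pow]
  rw [Finset.sum_ite_eq]
  split_ifs with hk
  · ring
  · rw [Nat.choose_eq_zero_of_lt (by simpa [Nat.lt_succ_iff] using hk)]
    simp

theorem polyEulerOp_laguerreNeg (n : ℕ) :
    polyEulerOp (1 / ((n : K) + 1)) (laguerreNeg n) = laguerreNeg (n + 1) := by
  ext (_ | k)
  · simp [coeff_polyEulerOp_zero, coeff_laguerreNeg]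
  · rw [coeff_polyEulerOp_succ]
    simp only [coeff_laguerreNeg]
    have hpascal : ((n + 1).choose (k + 1) : K) = n.choose k + n.choose (k + 1) := by
      exact_mod_cast Nat.choose_succ_succ' n k
    have habsorb : ((n : K) + 1) * n.choose k = (n + 1).choose (k + 1) * (k + 1) := by
      exact_mod_cast Nat.add_one_mul_choose_eq n k
    have hfact : (k.factorial : K) ≠ 0 := Nat.cast_ne_zero.mpr k.factorial_ne_zero
    rw [hpascal] at habsorb ⊢
    rw [Nat.factorial_succ]
    push_cast
    field_simp
    linear_combination -habsorb

theorem polyOpProd_reciprocal_one (n : ℕ) :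
    polyOpProd n (fun i => (1 : K) / (i.1 + 1)) 1 = laguerreNeg n := by
  induction n with
  | zero => simp [polyOpProd, laguerreNeg]
  | succ n ih =>
    simp only [polyOpProd_succ', Function.comp_apply, Fin.val_last, Fin.val_castSucc]
    rw [← (polyOpProd_commute _ _ _).eq, ih, polyEulerOp_laguerreNeg]

end Laguerre

theorem opProd_reciprocal_exp_general (n : ℕ) :
    opProd n (fun i => (1 : ℝ) / (i.1 + 1)) Real.exp =
      fun x => (∑ j ∈ Finset.range (n + 1), (1 / (j.factorial : ℝ)) * (n.choose j : ℝ) * x ^ j) *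
        Real.exp x := by
  have hexp : Real.exp = evalMulExp 1 := by
    funext x
    simp [evalMulExp]
  rw [hexp, ← (semiconj_evalMulExp_opProd n _).eq, polyOpProd_reciprocal_one]
  funext x
  simp [evalMulExp, laguerreNeg, eval_finsetSum]

theorem opProd_reciprocal_exp (n : ℕ) (hn : 1 ≤ n) :
    opProd n (fun i => (1 : ℝ) / (i.1 + 1)) Real.exp =
      fun x => (∑ j ∈ Finset.range (n + 1), (1 / (j.factorial : ℝ)) * (n.choose j : ℝ) * x ^ j) *
        Real.exp x :=
  opProd_reciprocal_exp_general n
end
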